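/- Let Φ(A) = Σ_k V_k* A V_k be a unital map on n×n complex matrices. If A satisfies Φ(A*A) = Φ(A)*Φ(A) and Φ(AA*) = Φ(A)Φ(A)*, then A commutes with V_j V_k* for all j,k. -/

import Mathlib

/-!
Write `Φ X = ∑ₖ Vₖ* X Vₖ`. Because `∑ₖ Vₖ* Vₖ = 1`, the Schwarz defect is a sum of squares,
`Φ(A*A) - Φ(A)* Φ(A) = ∑ₖ (A Vₖ - Vₖ Φ(A))* (A Vₖ - Vₖ Φ(A))`,
so equality in the Schwarz inequality forces `A Vₖ = Vₖ Φ(A)` for every `k`. Applied to `A*`, the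
second hypothesis gives `Vₖ* A = Φ(A) Vₖ*`, and then `A Vⱼ Vₖ* = Vⱼ Φ(A) Vₖ* = Vⱼ Vₖ* A`.
-/

open Matrix Finset

section KrausMap

variable {R ι : Type*} [Ring R] [StarRing R] [Fintype ι]

def krausMap (V : ι → R) (X : R) : R := ∑ k, star (V k) * X * V k

theorem star_krausMap (V : ι → R) (X : R) : star (krausMap V X) = krausMap V (star X) := by
  simp only [krausMap, star_sum, star_mul, star_star, mul_assoc]

theorem sum_star_mul_self_sub_eq_krausMap_sub {V : ι → R} (hV : ∑ k, star (V k) * V k = 1)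
    (A : R) :
    ∑ k, star (A * V k - V k * krausMap V A) * (A * V k - V k * krausMap V A) =
      krausMap V (star A * A) - star (krausMap V A) * krausMap V A := by
  set Φ := krausMap V A
  have expand : ∀ k, star (A * V k - V k * Φ) * (A * V k - V k * Φ) =
      star (V k) * (star A * A) * V k - star (V k) * star A * V k * Φ
        - star Φ * (star (V k) * A * V k) + star Φ * (star (V k) * V k) * Φ := by
    intro k
    simp only [star_sub, star_mul]
    noncomm_ring
  simp only [expand, sum_add_distrib, sum_sub_distrib, ← sum_mul, ← mul_sum, hV, mul_one]
  rw [← krausMap, ← krausMap, ← star_krausMap]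
  abel

end KrausMap

open scoped MatrixOrder ComplexOrder in
theorem Matrix.sum_conjTranspose_mul_self_eq_zero_iff {ι m n 𝕜 : Type*} [Fintype ι] [Fintype m]
    [Fintype n] [RCLike 𝕜] {B : ι → Matrix m n 𝕜} :
    ∑ k, (B k)ᴴ * B k = 0 ↔ ∀ k, B k = 0 := by
  have hnonneg : ∀ k ∈ (univ : Finset ι), 0 ≤ (B k)ᴴ * B k := fun k _ ↦
    (posSemidef_conjTranspose_mul_self (B k)).nonneg
  simp only [sum_eq_zero_iff_of_nonneg hnonneg, mem_univ, forall_const,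
    conjTranspose_mul_self_eq_zero]

theorem krausMap_star_mul_self_eq_iff {ι n 𝕜 : Type*} [Fintype ι] [Fintype n] [DecidableEq n]
    [RCLike 𝕜] {V : ι → Matrix n n 𝕜} (hV : ∑ k, star (V k) * V k = 1) (A : Matrix n n 𝕜) :
    krausMap V (star A * A) = star (krausMap V A) * krausMap V A ↔
      ∀ k, A * V k = V k * krausMap V A := by
  rw [← sub_eq_zero, ← sum_star_mul_self_sub_eq_krausMap_sub hV]
  simp only [star_eq_conjTranspose, sum_conjTranspose_mul_self_eq_zero_iff, sub_eq_zero]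

theorem stmt_3 {n m : ℕ} (V : Fin m → Matrix (Fin n) (Fin n) ℂ)
    (hV : ∑ k, (V k)ᴴ * V k = 1)
    (A : Matrix (Fin n) (Fin n) ℂ)
    (h1 : (∑ k, (V k)ᴴ * (Aᴴ * A) * V k)
      = (∑ k, (V k)ᴴ * A * V k)ᴴ * (∑ k, (V k)ᴴ * A * V k))
    (h2 : (∑ k, (V k)ᴴ * (A * Aᴴ) * V k)
      = (∑ k, (V k)ᴴ * A * V k) * (∑ k, (V k)ᴴ * A * V k)ᴴ) :
    ∀ j k, A * (V j * (V k)ᴴ) = (V j * (V k)ᴴ) * A := by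
  set Φ := krausMap V A
  have hΦ : star (krausMap V (star A)) = Φ := by rw [star_krausMap, star_star]
  have right : ∀ k, A * V k = V k * Φ := (krausMap_star_mul_self_eq_iff hV A).mp h1
  have left : ∀ k, (V k)ᴴ * A = Φ * (V k)ᴴ := by
    have h2' : krausMap V (star (star A) * star A) =
        star (krausMap V (star A)) * krausMap V (star A) := by
      rw [hΦ, ← star_krausMap, star_star]
      exact h2
    intro k
    have h := congrArg star ((krausMap_star_mul_self_eq_iff hV (star A)).mp h2' k)
    rwa [star_mul, star_mul, star_star, hΦ] at h
  intro j k
  calc A * (V j * (V k)ᴴ) = V j * (Φ * (V k)ᴴ) := by rw [← mul_assoc, right, mul_assoc]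
    _ = (V j * (V k)ᴴ) * A := by rw [← left, mul_assoc]
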